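/- Let (S, F, μ) be a probability space and let d be a positive integer. There exists a constant C_d > 0, depending only on d, such that for every ε > 0 and every measurable set A ⊆ S^d with μ^{⊗d}(A) > 1 − ε there exists a measurable set B ⊆ A with μ^{⊗d}(B) ≥ 1 − C_d · ε^{1/2^{d−1}} and with the following property: for every nonempty subset I ⊆ {1,…,d} and every x_{I^c} ∈ S^{I^c}, the section B_{x_{I^c}} = { x_I ∈ S^I : (x_I, x_{I^c}) ∈ B } is either empty or satisfies μ^{⊗|I|}(B_{x_{I^c}}) ≥ 1 − C_d · ε^{1/2^{d−1}}. -/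

import Mathlib

/-!
Let `D_I(x) = (∫⋯∫⁻_I, Aᶜ.indicator 1 ∂μ) x`, the measure of the `y` with `I.piecewise y x ∉ A`,
and let `B` consist of the points of `A` at which `D_I ≤ t_I := ε ^ (1 / 2 ^ (d - #I))` for every
nonempty `I`. If some `J ⊇ I₀` violates this at `x`, the `I₀`-section of `B` through `x` is
empty, because `D_J` does not see the coordinates in `J`. Otherwise that section misses, besides
a set of measure `D_{I₀}(x) ≤ t_{I₀}`, only the points where `D_I > t_I` for some nonempty
`I ⊉ I₀`. Integrating `D_I` over the coordinates in `I₀` gives `D_{I₀ ∪ I}(x) ≤ t_{I₀ ∪ I}`, so by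
Markov's inequality these points have measure at most `t_{I₀ ∪ I} / t_I ≤ ε ^ (1 / 2 ^ (d - 1))`.
There are fewer than `2 ^ d` such `I`, and `B` itself is its section in all coordinates.
-/

open MeasureTheory Finset Function
open scoped ENNReal

namespace Real

theorem rpow_one_div_two_pow_le_rpow_one_div_two_pow {ε : ℝ} (hε : 0 < ε) (hε1 : ε ≤ 1)
    {m n : ℕ} (hmn : m ≤ n) : ε ^ ((1 : ℝ) / 2 ^ m) ≤ ε ^ ((1 : ℝ) / 2 ^ n) :=
  rpow_le_rpow_of_exponent_ge hε hε1 <|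
    one_div_le_one_div_of_le (by positivity) (pow_le_pow_right₀ one_le_two hmn)

theorem rpow_one_div_two_pow_div_le {ε : ℝ} (hε : 0 < ε) (hε1 : ε ≤ 1) {m n : ℕ}
    (hmn : m < n) : ε ^ ((1 : ℝ) / 2 ^ m) / ε ^ ((1 : ℝ) / 2 ^ n) ≤ ε ^ ((1 : ℝ) / 2 ^ n) := by
  rw [div_le_iff₀ (rpow_pos_of_pos hε _), ← rpow_add hε]
  refine rpow_le_rpow_of_exponent_ge hε hε1 ?_
  have h : (2 : ℝ) ^ m * 2 ≤ 2 ^ n := pow_succ (2 : ℝ) m ▸ pow_le_pow_right₀ one_le_two hmn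
  rw [← add_div, div_le_div_iff₀ (by positivity) (by positivity)]
  linarith

end Real

namespace MeasureTheory

section Marginal

variable {ι : Type*} [DecidableEq ι] {X : ι → Type*}

theorem piecewise_updateFinset (s : Finset ι) (x z : ∀ i, X i) (w : ∀ i : s, X i) :
    s.piecewise (updateFinset z s w) x = updateFinset x s w := by
  ext i
  by_cases hi : i ∈ s <;> simp [Finset.piecewise, updateFinset, hi]

variable [∀ i, MeasurableSpace (X i)] {μ : ∀ i, Measure (X i)}

theorem measurable_piecewise_left (s : Finset ι) (x : ∀ i, X i) :
    Measurable fun y : ∀ i, X i => s.piecewise y x := by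
  refine measurable_pi_lambda _ fun i => ?_
  by_cases hi : i ∈ s <;> simp [Finset.piecewise, hi, measurable_pi_apply]

theorem dependsOn_lmarginal (s : Finset ι) (f : (∀ i, X i) → ℝ≥0∞) :
    DependsOn (∫⋯∫⁻_s, f ∂μ) (↑s)ᶜ :=
  fun _ _ h => lmarginal_congr μ f h

variable [∀ i, IsProbabilityMeasure (μ i)]

theorem lmarginal_eq_self_of_dependsOn {s : Finset ι} {g : (∀ i, X i) → ℝ≥0∞}
    (hg : DependsOn g (↑s)ᶜ) : ∫⋯∫⁻_s, g ∂μ = g := by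
  ext x
  rw [lmarginal, lintegral_congr fun y => hg fun i hi => ?_, lintegral_const, measure_univ,
    mul_one]
  simp_all [updateFinset]

theorem lmarginal_eq_lmarginal_sdiff {I J : Finset ι} {g : (∀ i, X i) → ℝ≥0∞}
    (hg : Measurable g) (hdep : DependsOn g (↑I)ᶜ) :
    ∫⋯∫⁻_J, g ∂μ = ∫⋯∫⁻_(J \ I), g ∂μ := by
  conv_lhs => rw [← sdiff_union_inter J I]
  rw [lmarginal_union μ g hg (disjoint_sdiff_inter J I),
    lmarginal_eq_self_of_dependsOn (hdep.mono ?_)]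
  simp

theorem pi_setOf_piecewise_mem_eq_lmarginal [Fintype ι] {E : Set (∀ i, X i)} (hE : MeasurableSet E)
    (s : Finset ι) (x : ∀ i, X i) :
    Measure.pi μ {y | s.piecewise y x ∈ E} = (∫⋯∫⁻_s, E.indicator 1 ∂μ) x := by
  set g : (∀ i, X i) → ℝ≥0∞ := fun y => E.indicator 1 (s.piecewise y x)
  have hg : Measurable g := (measurable_one.indicator hE).comp (measurable_piecewise_left s x)
  have hconst : ∫⋯∫⁻_s, g ∂μ = fun _ => (∫⋯∫⁻_s, E.indicator 1 ∂μ) x := by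
    ext z
    simp only [lmarginal, g, piecewise_updateFinset]
  calc Measure.pi μ {y | s.piecewise y x ∈ E} = ∫⁻ y, g y ∂Measure.pi μ :=
        (lintegral_indicator_one (measurable_piecewise_left s x hE)).symm
    _ = (∫⋯∫⁻_(s ∪ sᶜ), g ∂μ) x := by rw [union_compl, lintegral_eq_lmarginal_univ x]
    _ = (∫⋯∫⁻_s, E.indicator 1 ∂μ) x := by
        rw [lmarginal_union' μ g hg disjoint_compl_right, hconst,
          lmarginal_eq_self_of_dependsOn ((dependsOn_const _).mono (Set.empty_subset _))]

theorem mul_lmarginal_indicator_lt_le {f : (∀ i, X i) → ℝ≥0∞} (hf : Measurable f)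
    {I J : Finset ι} {t : ℝ≥0∞} (ht : t ≠ ∞) (x : ∀ i, X i) :
    t * (∫⋯∫⁻_J, {z | t < (∫⋯∫⁻_I, f ∂μ) z}.indicator 1 ∂μ) x ≤
      (∫⋯∫⁻_(J ∪ I), f ∂μ) x := by
  set g := ∫⋯∫⁻_I, f ∂μ
  have hlevel : MeasurableSet {z | t < g z} := measurableSet_lt measurable_const (hf.lmarginal μ)
  have hdep : DependsOn ({z | t < g z}.indicator (1 : (∀ i, X i) → ℝ≥0∞)) (↑I)ᶜ :=
    fun y z h => by
      simp only [Set.indicator, Set.mem_ofPred_eq, Pi.one_apply, g, dependsOn_lmarginal I f h]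
  rw [lmarginal_eq_lmarginal_sdiff (measurable_one.indicator hlevel) hdep,
    ← sdiff_union_self_eq_union, lmarginal_union μ f hf disjoint_sdiff_self_left, lmarginal,
    lmarginal, ← lintegral_const_mul' _ _ ht]
  refine lintegral_mono fun w => ?_
  by_cases h : t < g (updateFinset x (J \ I) w)
  · simpa [h] using h.le
  · simp [h]

end Marginal

theorem one_sub_le_toReal_of_measure_compl_le {α : Type*} [MeasurableSpace α] {ν : Measure α}
    [IsProbabilityMeasure ν] {s : Set α} (hs : MeasurableSet s) {r : ℝ} (hr : 0 ≤ r)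
    (h : ν sᶜ ≤ ENNReal.ofReal r) : 1 - r ≤ (ν s).toReal := by
  have := ENNReal.toReal_le_of_le_ofReal hr h
  rw [prob_compl_eq_one_sub hs, ENNReal.toReal_sub_of_le prob_le_one ENNReal.one_ne_top,
    ENNReal.toReal_one] at this
  linarith

section SectionThreshold

variable {ι : Type*} [Fintype ι]

/-- Adding a coordinate to `I` squares the threshold, hence `t J / t I ≤ t I` when `#I < #J`. -/
noncomputable def sectionThreshold (ε : ℝ) (I : Finset ι) : ℝ≥0∞ :=
  ENNReal.ofReal (ε ^ ((1 : ℝ) / 2 ^ (Fintype.card ι - #I)))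

theorem sectionThreshold_ne_zero {ε : ℝ} (hε : 0 < ε) {I : Finset ι} :
    sectionThreshold ε I ≠ 0 :=
  (ENNReal.ofReal_pos.mpr (Real.rpow_pos_of_pos hε _)).ne'

theorem sectionThreshold_le {ε : ℝ} (hε : 0 < ε) (hε1 : ε ≤ 1) {I : Finset ι}
    (hI : Fintype.card ι - #I ≤ Fintype.card ι - 1) :
    sectionThreshold ε I ≤ ENNReal.ofReal (ε ^ ((1 : ℝ) / 2 ^ (Fintype.card ι - 1))) :=
  ENNReal.ofReal_le_ofReal (Real.rpow_one_div_two_pow_le_rpow_one_div_two_pow hε hε1 hI)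

theorem sectionThreshold_union_div_le [DecidableEq ι] {ε : ℝ} (hε : 0 < ε) (hε1 : ε ≤ 1)
    {I₀ I : Finset ι} (hI : I.Nonempty) (hI₀I : ¬ I₀ ⊆ I) :
    sectionThreshold ε (I₀ ∪ I) / sectionThreshold ε I ≤
      ENNReal.ofReal (ε ^ ((1 : ℝ) / 2 ^ (Fintype.card ι - 1))) := by
  have hlt : #I < #(I₀ ∪ I) := card_lt_card <| Finset.ssubset_iff_subset_ne.mpr
    ⟨subset_union_right, fun h => hI₀I (h ▸ subset_union_left)⟩
  have hle : #(I₀ ∪ I) ≤ Fintype.card ι := card_le_univ _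
  have hpos := hI.card_pos
  rw [sectionThreshold, sectionThreshold,
    ← ENNReal.ofReal_div_of_pos (Real.rpow_pos_of_pos hε _)]
  refine ENNReal.ofReal_le_ofReal ((Real.rpow_one_div_two_pow_div_le hε hε1 ?_).trans
    (Real.rpow_one_div_two_pow_le_rpow_one_div_two_pow hε hε1 ?_)) <;> omega

theorem sum_sectionThreshold_union_div_le [DecidableEq ι] {ε : ℝ} (hε : 0 < ε) (hε1 : ε ≤ 1)
    (I₀ : Finset ι) :
    ∑ I ∈ univ.filter (fun I => I.Nonempty ∧ ¬ I₀ ⊆ I),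
        sectionThreshold ε (I₀ ∪ I) / sectionThreshold ε I ≤
      2 ^ Fintype.card ι * ENNReal.ofReal (ε ^ ((1 : ℝ) / 2 ^ (Fintype.card ι - 1))) := by
  refine (sum_le_card_nsmul _ _ (ENNReal.ofReal (ε ^ ((1 : ℝ) / 2 ^ (Fintype.card ι - 1))))
    fun I hI => ?_).trans ?_
  · obtain ⟨hIne, hI₀I⟩ := (mem_filter.mp hI).2
    exact sectionThreshold_union_div_le hε hε1 hIne hI₀I
  · rw [nsmul_eq_mul]
    gcongr
    exact_mod_cast (card_le_univ _).trans_eq (by simp [Fintype.card_finset])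

end SectionThreshold

section LargeSectionPart

variable {ι : Type*} [DecidableEq ι] {X : ι → Type*} [∀ i, MeasurableSpace (X i)]
  {μ : ∀ i, Measure (X i)} {A : Set (∀ i, X i)} {t : Finset ι → ℝ≥0∞}

def largeSectionPart (μ : ∀ i, Measure (X i)) (A : Set (∀ i, X i)) (t : Finset ι → ℝ≥0∞) :
    Set (∀ i, X i) :=
  A ∩ {x | ∀ I : Finset ι, I.Nonempty → (∫⋯∫⁻_I, Aᶜ.indicator 1 ∂μ) x ≤ t I}

theorem setOf_piecewise_mem_largeSectionPart_eq_empty {I₀ I : Finset ι} (hI₀I : I₀ ⊆ I)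
    (hI : I.Nonempty) {x : ∀ i, X i} (hx : t I < (∫⋯∫⁻_I, Aᶜ.indicator 1 ∂μ) x) :
    {y | I₀.piecewise y x ∈ largeSectionPart μ A t} = ∅ := by
  refine Set.eq_empty_of_forall_notMem fun y hy => hx.not_ge ?_
  rw [← dependsOn_lmarginal I _ fun i hi => ?_]
  · exact hy.2 I hI
  · exact I₀.piecewise_eq_of_notMem _ _ fun hi₀ => hi (hI₀I hi₀)

variable [Fintype ι] [∀ i, IsProbabilityMeasure (μ i)]

theorem measurableSet_largeSectionPart (hA : MeasurableSet A) :
    MeasurableSet (largeSectionPart μ A t) := by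
  refine hA.inter ?_
  simp only [Set.ofPred_forall]
  exact .iInter fun I => .iInter fun _ =>
    measurableSet_le ((measurable_one.indicator hA.compl).lmarginal μ) measurable_const

theorem pi_setOf_piecewise_notMem_largeSectionPart_le (hA : MeasurableSet A)
    (ht₀ : ∀ I, t I ≠ 0) (ht : ∀ I, t I ≠ ∞) {I₀ : Finset ι} {x : ∀ i, X i}
    (hx : ∀ I, I₀ ⊆ I → I.Nonempty → (∫⋯∫⁻_I, Aᶜ.indicator 1 ∂μ) x ≤ t I) :
    Measure.pi μ {y | I₀.piecewise y x ∉ largeSectionPart μ A t} ≤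
      (∫⋯∫⁻_I₀, Aᶜ.indicator 1 ∂μ) x +
        ∑ I ∈ univ.filter (fun I => I.Nonempty ∧ ¬ I₀ ⊆ I), t (I₀ ∪ I) / t I := by
  set D := fun I => ∫⋯∫⁻_I, Aᶜ.indicator (1 : (∀ i, X i) → ℝ≥0∞) ∂μ
  set 𝒥 := univ.filter (fun I : Finset ι => I.Nonempty ∧ ¬ I₀ ⊆ I)
  have hcover : {y | I₀.piecewise y x ∉ largeSectionPart μ A t} ⊆
      {y | I₀.piecewise y x ∈ Aᶜ} ∪ ⋃ I ∈ 𝒥, {y | I₀.piecewise y x ∈ {z | t I < D I z}} := by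
    intro y hy
    by_cases hyA : I₀.piecewise y x ∈ A
    · simp only [largeSectionPart, Set.mem_inter_iff, Set.mem_ofPred_eq, hyA, true_and,
        not_forall, not_le] at hy
      obtain ⟨I, hIne, hI⟩ := hy
      have hI₀I : ¬ I₀ ⊆ I := fun hI₀I => (hx I hI₀I hIne).not_gt <| by
        rwa [← dependsOn_lmarginal I _ fun i hi =>
          I₀.piecewise_eq_of_notMem y x fun hi₀ => hi (hI₀I hi₀)]
      exact .inr (Set.mem_biUnion (mem_filter.mpr ⟨mem_univ _, hIne, hI₀I⟩) hI)
    · exact .inl hyA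
  have hbad : ∀ I ∈ 𝒥,
      Measure.pi μ {y | I₀.piecewise y x ∈ {z | t I < D I z}} ≤ t (I₀ ∪ I) / t I := by
    intro I hI
    obtain ⟨hIne, -⟩ := (mem_filter.mp hI).2
    rw [pi_setOf_piecewise_mem_eq_lmarginal (measurableSet_lt measurable_const
      ((measurable_one.indicator hA.compl).lmarginal μ)),
      ENNReal.le_div_iff_mul_le (.inl (ht₀ I)) (.inl (ht I)), mul_comm]
    exact (mul_lmarginal_indicator_lt_le (measurable_one.indicator hA.compl) (ht I) x).trans
      (hx _ subset_union_left (hIne.mono subset_union_right))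
  calc Measure.pi μ {y | I₀.piecewise y x ∉ largeSectionPart μ A t}
      ≤ Measure.pi μ {y | I₀.piecewise y x ∈ Aᶜ} +
          Measure.pi μ (⋃ I ∈ 𝒥, {y | I₀.piecewise y x ∈ {z | t I < D I z}}) :=
        (measure_mono hcover).trans (measure_union_le _ _)
    _ ≤ D I₀ x + ∑ I ∈ 𝒥, t (I₀ ∪ I) / t I :=
        add_le_add (pi_setOf_piecewise_mem_eq_lmarginal hA.compl I₀ x).le
          ((measure_biUnion_finset_le _ _).trans (sum_le_sum hbad))

theorem one_sub_le_pi_setOf_piecewise_mem_largeSectionPart {ε : ℝ} (hε : 0 < ε) (hε1 : ε ≤ 1)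
    (hA : MeasurableSet A) {I₀ : Finset ι} {x : ∀ i, X i}
    (hx : ∀ I, I₀ ⊆ I → I.Nonempty → (∫⋯∫⁻_I, Aᶜ.indicator 1 ∂μ) x ≤ sectionThreshold ε I)
    (hI₀ : (∫⋯∫⁻_I₀, Aᶜ.indicator 1 ∂μ) x ≤
      ENNReal.ofReal (ε ^ ((1 : ℝ) / 2 ^ (Fintype.card ι - 1)))) :
    1 - (2 ^ Fintype.card ι + 1) * ε ^ ((1 : ℝ) / 2 ^ (Fintype.card ι - 1)) ≤
      (Measure.pi μ {y | I₀.piecewise y x ∈ largeSectionPart μ A (sectionThreshold ε)}).toReal := by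
  set e := ε ^ ((1 : ℝ) / 2 ^ (Fintype.card ι - 1))
  refine one_sub_le_toReal_of_measure_compl_le
    (measurable_piecewise_left I₀ x (measurableSet_largeSectionPart hA)) (by positivity) ?_
  calc Measure.pi μ {y | I₀.piecewise y x ∈ largeSectionPart μ A (sectionThreshold ε)}ᶜ
      ≤ (∫⋯∫⁻_I₀, Aᶜ.indicator 1 ∂μ) x + ∑ I ∈ univ.filter (fun I => I.Nonempty ∧ ¬ I₀ ⊆ I),
          sectionThreshold ε (I₀ ∪ I) / sectionThreshold ε I :=
        pi_setOf_piecewise_notMem_largeSectionPart_le hA (fun _ => sectionThreshold_ne_zero hε)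
          (fun _ => ENNReal.ofReal_ne_top) hx
    _ ≤ ENNReal.ofReal e + 2 ^ Fintype.card ι * ENNReal.ofReal e :=
        add_le_add hI₀ (sum_sectionThreshold_union_div_le hε hε1 I₀)
    _ = ENNReal.ofReal ((2 ^ Fintype.card ι + 1) * e) := by
        rw [ENNReal.ofReal_mul (by positivity), ENNReal.ofReal_add (by positivity) zero_le_one,
          ENNReal.ofReal_pow zero_le_two, ENNReal.ofReal_ofNat, ENNReal.ofReal_one, add_mul,
          one_mul, add_comm]

theorem exists_subset_large_sections {ε : ℝ} (hε : 0 < ε) (hA : MeasurableSet A)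
    (hAε : 1 - ε < (Measure.pi μ A).toReal) :
    ∃ B, MeasurableSet B ∧ B ⊆ A ∧
      1 - (2 ^ Fintype.card ι + 1) * ε ^ ((1 : ℝ) / 2 ^ (Fintype.card ι - 1)) ≤
        (Measure.pi μ B).toReal ∧
      ∀ I : Finset ι, I.Nonempty → ∀ x : ∀ i, X i, {y | I.piecewise y x ∈ B} = ∅ ∨
        1 - (2 ^ Fintype.card ι + 1) * ε ^ ((1 : ℝ) / 2 ^ (Fintype.card ι - 1)) ≤
          (Measure.pi μ {y | I.piecewise y x ∈ B}).toReal := by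
  rcases le_or_gt 1 ε with hε1 | hε1
  · have he : 1 ≤ ε ^ ((1 : ℝ) / 2 ^ (Fintype.card ι - 1)) := Real.one_le_rpow hε1 (by positivity)
    refine ⟨∅, .empty, Set.empty_subset _, ?_, fun I _ x => .inl (by simp)⟩
    simp only [measure_empty, ENNReal.toReal_zero]
    nlinarith [pow_pos (two_pos : (0 : ℝ) < 2) (Fintype.card ι)]
  refine ⟨largeSectionPart μ A (sectionThreshold ε), measurableSet_largeSectionPart hA,
    Set.inter_subset_left, ?_, fun I hI x => ?_⟩
  · obtain ⟨x₀⟩ := nonempty_of_isProbabilityMeasure (Measure.pi μ)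
    have hsection : (∫⋯∫⁻_univ, Aᶜ.indicator 1 ∂μ) x₀ = Measure.pi μ Aᶜ := by
      rw [← pi_setOf_piecewise_mem_eq_lmarginal hA.compl]
      simp only [piecewise_univ, Set.ofPred_mem_eq]
    have hAc : Measure.pi μ Aᶜ ≤ sectionThreshold ε (univ : Finset ι) := by
      rw [prob_compl_eq_one_sub hA, sectionThreshold, card_univ (α := ι), Nat.sub_self,
        pow_zero, div_one, Real.rpow_one, ENNReal.le_ofReal_iff_toReal_le (by simp) hε.le,
        ENNReal.toReal_sub_of_le prob_le_one ENNReal.one_ne_top, ENNReal.toReal_one]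
      linarith
    simpa only [piecewise_univ, Set.ofPred_mem_eq] using
      one_sub_le_pi_setOf_piecewise_mem_largeSectionPart hε hε1.le hA (I₀ := univ) (x := x₀)
        (fun I hI _ => univ_subset_iff.mp hI ▸ hsection ▸ hAc)
        (hsection ▸ hAc.trans (sectionThreshold_le hε hε1.le (by simp)))
  · by_cases h : ∃ J, I ⊆ J ∧ sectionThreshold ε J < (∫⋯∫⁻_J, Aᶜ.indicator 1 ∂μ) x
    · obtain ⟨J, hIJ, hJ⟩ := h
      exact .inl (setOf_piecewise_mem_largeSectionPart_eq_empty hIJ (hI.mono hIJ) hJ)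
    · push Not at h
      refine .inr (one_sub_le_pi_setOf_piecewise_mem_largeSectionPart hε hε1.le hA
        (fun J hJ _ => h J hJ) ((h I subset_rfl).trans (sectionThreshold_le hε hε1.le ?_)))
      have := hI.card_pos
      omega

end LargeSectionPart

end MeasureTheory

theorem stmt_1 {S : Type*} [MeasurableSpace S] (μ : Measure S) [IsProbabilityMeasure μ]
    (d : ℕ) :
    ∃ C : ℝ, 0 < C ∧
      ∀ ε : ℝ, 0 < ε → ∀ A : Set (Fin d → S), MeasurableSet A →
        1 - ε < ((Measure.pi fun _ : Fin d => μ) A).toReal →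
        ∃ B : Set (Fin d → S), MeasurableSet B ∧ B ⊆ A ∧
          1 - C * ε ^ ((1 : ℝ) / 2 ^ (d - 1)) ≤ ((Measure.pi fun _ : Fin d => μ) B).toReal ∧
          ∀ I : Finset (Fin d), I.Nonempty → ∀ x : Fin d → S,
            {y : Fin d → S | (fun i => if i ∈ I then y i else x i) ∈ B} = ∅ ∨
            1 - C * ε ^ ((1 : ℝ) / 2 ^ (d - 1)) ≤
              ((Measure.pi fun _ : Fin d => μ)
                {y : Fin d → S | (fun i => if i ∈ I then y i else x i) ∈ B}).toReal := by
  refine ⟨2 ^ d + 1, by positivity, fun ε hε A hA hAε => ?_⟩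
  have h := exists_subset_large_sections (μ := fun _ : Fin d => μ) hε hA hAε
  rw [Fintype.card_fin] at h
  exact h
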